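/- arXiv:1803.04144 — 3 statements merged into one kernel-verified Lean document; each statement's English description precedes it below -/
import Mathlib

section
/- For a finite discounted MDP, there exists a unique function V* : S → ℝ satisfying Bellman's optimality equation V*(s) = max_{a∈A} γ · ∑_{s'∈S} P(s,a,s') · (V*(s') + R(s,a,s')) for all s ∈ S (i.e., the Bellman optimality operator T has a unique fixed point). -/
open Finset

/-- Policy-evaluation operator `T_π` of a finite discounted MDP:
`(T_π V)(s) = γ · ∑_{s'} P(s, π(s), s') · (V(s') + R(s, π(s), s'))`. -/
noncomputable def polOp {S A : Type*} [Fintype S]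
    (P : S → A → S → ℝ) (R : S → A → S → ℝ) (γ : ℝ) (π : S → A)
    (V : S → ℝ) (s : S) : ℝ :=
  γ * ∑ s' : S, P s (π s) s' * (V s' + R s (π s) s')

/-- Bellman optimality operator `T` of a finite discounted MDP:
`(T V)(s) = max_{a ∈ A} γ · ∑_{s'} P(s, a, s') · (V(s') + R(s, a, s'))`. -/
noncomputable def bellOp {S A : Type*} [Fintype S] [Fintype A] [Nonempty A]
    (P : S → A → S → ℝ) (R : S → A → S → ℝ) (γ : ℝ)
    (V : S → ℝ) (s : S) : ℝ :=
  Finset.univ.sup' Finset.univ_nonempty fun a : A =>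
    γ * ∑ s' : S, P s a s' * (V s' + R s a s')

/-- Sup norm `‖V‖_∞ = max_{s ∈ S} |V(s)|` on a finite nonempty state space. -/
noncomputable def supNorm {S : Type*} [Fintype S] [Nonempty S] (V : S → ℝ) : ℝ :=
  Finset.univ.sup' Finset.univ_nonempty fun s : S => |V s|

/-- Bellman's optimality equation has a unique solution `V*`: the Bellman
optimality operator `T` has a unique fixed point. -/
theorem bellOp_unique_fixed_point
    {S A : Type*} [Fintype S] [Fintype A] [Nonempty S] [Nonempty A]
    (P : S → A → S → ℝ) (R : S → A → S → ℝ) (γ : ℝ)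
    (hP0 : ∀ s a s', 0 ≤ P s a s') (hP1 : ∀ s a, ∑ s' : S, P s a s' = 1)
    (hγ0 : 0 < γ) (hγ1 : γ < 1) :
    ∃! V : S → ℝ, ∀ s : S, V s = bellOp P R γ V s := by
  classical
  have hγ0' : (0:ℝ) ≤ γ := hγ0.le
  set K : NNReal := ⟨γ, hγ0'⟩ with hKdef
  set T : (S → ℝ) → (S → ℝ) := fun V => bellOp P R γ V with hT
  have key : ∀ V W : S → ℝ, ∀ s, dist (T V s) (T W s) ≤ γ * dist V W := by
    intro V W s
    have hd0 : (0:ℝ) ≤ dist V W := dist_nonneg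
    have hterm : ∀ a : A,
        |γ * ∑ s' : S, P s a s' * (V s' + R s a s')
          - γ * ∑ s' : S, P s a s' * (W s' + R s a s')| ≤ γ * dist V W := by
      intro a
      rw [← mul_sub, abs_mul, abs_of_nonneg hγ0', ← Finset.sum_sub_distrib]
      refine mul_le_mul_of_nonneg_left ?_ hγ0'
      calc |∑ s' : S, (P s a s' * (V s' + R s a s') - P s a s' * (W s' + R s a s'))|
          ≤ ∑ s' : S, |P s a s' * (V s' + R s a s') - P s a s' * (W s' + R s a s')| :=
            Finset.abs_sum_le_sum_abs _ _
        _ ≤ ∑ s' : S, P s a s' * dist V W := by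
            refine Finset.sum_le_sum fun s' _ => ?_
            rw [← mul_sub, abs_mul, abs_of_nonneg (hP0 s a s')]
            refine mul_le_mul_of_nonneg_left ?_ (hP0 s a s')
            have : V s' + R s a s' - (W s' + R s a s') = V s' - W s' := by ring
            rw [this]
            calc |V s' - W s'| = dist (V s') (W s') := (Real.dist_eq _ _).symm
              _ ≤ dist V W := dist_le_pi_dist V W s'
        _ = dist V W := by rw [← Finset.sum_mul, hP1, one_mul]
    rw [Real.dist_eq]
    rw [abs_sub_le_iff]
    constructor
    · rw [sub_le_iff_le_add]
      refine Finset.sup'_le _ _ fun a _ => ?_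
      have h1 := hterm a
      have h2 : γ * ∑ s' : S, P s a s' * (W s' + R s a s') ≤ T W s := by
        simp only [hT, bellOp]
        exact Finset.le_sup' (fun a : A => γ * ∑ s' : S, P s a s' * (W s' + R s a s'))
          (Finset.mem_univ a)
      have := (abs_sub_le_iff.mp h1).1
      linarith
    · rw [sub_le_iff_le_add]
      refine Finset.sup'_le _ _ fun a _ => ?_
      have h1 := hterm a
      have h2 : γ * ∑ s' : S, P s a s' * (V s' + R s a s') ≤ T V s := by
        simp only [hT, bellOp]
        exact Finset.le_sup' (fun a : A => γ * ∑ s' : S, P s a s' * (V s' + R s a s'))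
          (Finset.mem_univ a)
      have := (abs_sub_le_iff.mp h1).2
      linarith
  have hlip : LipschitzWith K T := by
    refine LipschitzWith.of_dist_le_mul fun V W => ?_
    rw [dist_pi_le_iff (by positivity)]
    intro s
    exact key V W s
  have hcon : ContractingWith K T := ⟨by exact_mod_cast hγ1, hlip⟩
  refine ⟨ContractingWith.fixedPoint T hcon, ?_, ?_⟩
  · intro s
    have := hcon.fixedPoint_isFixedPt
    exact congrFun this.symm s
  · intro V hV
    exact hcon.fixedPoint_unique (funext fun s => (hV s).symm)
end

section
/- For a finite discounted MDP, let π be a stationary policy with value function V^π, let Q_π(s,a) = γ · ∑_{s'∈S} P(s,a,s') · (V^π(s') + R(s,a,s')), and let π' be greedy with respect to Q_π. If V^{π'}(s) = V^π(s) for all s ∈ S, then V^π = V*, the unique fixed point of the Bellman optimality operator T; equivalently, if π is not optimal (V^π ≠ V*), then the greedy policy π' is a strict improvement: V^{π'}(s) ≥ V^π(s) for all s with strict inequality at some state. -/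
open Finset

/-- `Q` value function of a policy with value function `Vπ` (Equation (6)):
`Q_π(s,a) = γ · ∑_{s'} P(s,a,s') · (V^π(s') + R(s,a,s'))`. -/
noncomputable def Qval {S A : Type*} [Fintype S]
    (P : S → A → S → ℝ) (R : S → A → S → ℝ) (γ : ℝ)
    (Vπ : S → ℝ) (s : S) (a : A) : ℝ :=
  γ * ∑ s' : S, P s a s' * (Vπ s' + R s a s')

section Aux

variable {S A : Type*} [Fintype S] [Fintype A] [Nonempty S] [Nonempty A]

lemma sum_mul_le_aux (P : S → A → S → ℝ)
    (hP0 : ∀ s a s', 0 ≤ P s a s') (hP1 : ∀ s a, ∑ s' : S, P s a s' = 1)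
    (s : S) (a : A) (f : S → ℝ) (M : ℝ) (h : ∀ s', f s' ≤ M) :
    ∑ s' : S, P s a s' * f s' ≤ M := by
  calc ∑ s' : S, P s a s' * f s' ≤ ∑ s' : S, P s a s' * M :=
        Finset.sum_le_sum fun s' _ => mul_le_mul_of_nonneg_left (h s') (hP0 s a s')
    _ = M := by rw [← Finset.sum_mul, hP1, one_mul]

lemma pol_sub (P : S → A → S → ℝ) (R : S → A → S → ℝ) (γ : ℝ)
    (π : S → A) (V W : S → ℝ) (s : S) :
    polOp P R γ π V s - polOp P R γ π W s
      = γ * ∑ s' : S, P s (π s) s' * (V s' - W s') := by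
  unfold polOp
  rw [← mul_sub, ← Finset.sum_sub_distrib]
  congr 1
  apply Finset.sum_congr rfl
  intros; ring

/-- If `V ≤ T_π V` pointwise and `W` is a fixed point of `T_π`, then `V ≤ W`. -/
lemma le_of_le_polOp (P : S → A → S → ℝ) (R : S → A → S → ℝ) (γ : ℝ)
    (hP0 : ∀ s a s', 0 ≤ P s a s') (hP1 : ∀ s a, ∑ s' : S, P s a s' = 1)
    (hγ0 : 0 < γ) (hγ1 : γ < 1) (π : S → A) (V W : S → ℝ)
    (hV : ∀ s, V s ≤ polOp P R γ π V s) (hW : ∀ s, W s = polOp P R γ π W s) :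
    ∀ s, V s ≤ W s := by
  set M : ℝ := Finset.univ.sup' Finset.univ_nonempty (fun s => V s - W s) with hM
  have hMb : ∀ s : S, V s - W s ≤ M := fun s =>
    Finset.le_sup' (fun s => V s - W s) (Finset.mem_univ s)
  obtain ⟨s0, -, hs0⟩ := Finset.exists_mem_eq_sup' (Finset.univ_nonempty (α := S))
    (fun s => V s - W s)
  have h1 : M ≤ γ * M := by
    have h2 : V s0 - W s0 ≤ polOp P R γ π V s0 - polOp P R γ π W s0 := by
      have := hV s0; have := hW s0; linarith
    rw [pol_sub] at h2
    have h3 : ∑ s' : S, P s0 (π s0) s' * (V s' - W s') ≤ M :=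
      sum_mul_le_aux P hP0 hP1 s0 (π s0) _ M hMb
    have h4 : γ * (∑ s' : S, P s0 (π s0) s' * (V s' - W s')) ≤ γ * M :=
      mul_le_mul_of_nonneg_left h3 (le_of_lt hγ0)
    calc M = V s0 - W s0 := hs0
      _ ≤ γ * ∑ s' : S, P s0 (π s0) s' * (V s' - W s') := h2
      _ ≤ γ * M := h4
  have hM0 : M ≤ 0 := by nlinarith
  intro s
  have := hMb s
  linarith

/-- Fixed points of the Bellman optimality operator compare. -/
lemma bell_le (P : S → A → S → ℝ) (R : S → A → S → ℝ) (γ : ℝ)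
    (hP0 : ∀ s a s', 0 ≤ P s a s') (hP1 : ∀ s a, ∑ s' : S, P s a s' = 1)
    (hγ0 : 0 < γ) (hγ1 : γ < 1) (V W : S → ℝ)
    (hV : ∀ s, V s = bellOp P R γ V s) (hW : ∀ s, W s = bellOp P R γ W s) :
    ∀ s, V s ≤ W s := by
  set M : ℝ := Finset.univ.sup' Finset.univ_nonempty (fun s => V s - W s) with hM
  have hMb : ∀ s : S, V s - W s ≤ M := fun s =>
    Finset.le_sup' (fun s => V s - W s) (Finset.mem_univ s)
  obtain ⟨s0, -, hs0⟩ := Finset.exists_mem_eq_sup' (Finset.univ_nonempty (α := S))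
    (fun s => V s - W s)
  obtain ⟨a0, -, ha0⟩ := Finset.exists_mem_eq_sup' (Finset.univ_nonempty (α := A))
    (fun a : A => γ * ∑ s' : S, P s0 a s' * (V s' + R s0 a s'))
  have hVb : V s0 = γ * ∑ s' : S, P s0 a0 s' * (V s' + R s0 a0 s') := by
    rw [hV s0]; exact ha0
  have hWb : γ * ∑ s' : S, P s0 a0 s' * (W s' + R s0 a0 s') ≤ W s0 := by
    rw [hW s0]
    exact Finset.le_sup' (fun a : A => γ * ∑ s' : S, P s0 a s' * (W s' + R s0 a s'))
      (Finset.mem_univ a0)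
  have h2 : V s0 - W s0 ≤ γ * ∑ s' : S, P s0 a0 s' * (V s' - W s') := by
    have hsub : γ * ∑ s' : S, P s0 a0 s' * (V s' + R s0 a0 s')
        - γ * ∑ s' : S, P s0 a0 s' * (W s' + R s0 a0 s')
        = γ * ∑ s' : S, P s0 a0 s' * (V s' - W s') := by
      rw [← mul_sub, ← Finset.sum_sub_distrib]
      congr 1
      apply Finset.sum_congr rfl
      intros; ring
    linarith [hsub, hVb, hWb]
  have h3 : ∑ s' : S, P s0 a0 s' * (V s' - W s') ≤ M :=
    sum_mul_le_aux P hP0 hP1 s0 a0 _ M hMb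
  have h4 : γ * (∑ s' : S, P s0 a0 s' * (V s' - W s')) ≤ γ * M :=
    mul_le_mul_of_nonneg_left h3 (le_of_lt hγ0)
  have hs0' : M = V s0 - W s0 := hs0
  have h1 : M ≤ γ * M := by linarith
  have hM0 : M ≤ 0 := by nlinarith
  intro s
  have := hMb s
  linarith

end Aux

/-- Strict-improvement assertion of the policy improvement theorem: if the
greedy policy `π'` (w.r.t. `Q_π`) yields no improvement, i.e. `V^{π'} = V^π`,
then `V^π = V*`; equivalently, if `π` is not optimal (`V^π ≠ V*`), the greedy
policy is a strict improvement: `V^{π'} ≥ V^π` pointwise with strict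
inequality at some state. -/
theorem policy_improvement_strict
    {S A : Type*} [Fintype S] [Fintype A] [Nonempty S] [Nonempty A]
    (P : S → A → S → ℝ) (R : S → A → S → ℝ) (γ : ℝ)
    (hP0 : ∀ s a s', 0 ≤ P s a s') (hP1 : ∀ s a, ∑ s' : S, P s a s' = 1)
    (hγ0 : 0 < γ) (hγ1 : γ < 1)
    (π : S → A) (Vπ : S → ℝ) (hfix : ∀ s : S, Vπ s = polOp P R γ π Vπ s)
    (π' : S → A)
    (hgreedy : ∀ s : S,
      Qval P R γ Vπ s (π' s) =
        Finset.univ.sup' Finset.univ_nonempty (Qval P R γ Vπ s))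
    (Vπ' : S → ℝ) (hfix' : ∀ s : S, Vπ' s = polOp P R γ π' Vπ' s)
    (Vstar : S → ℝ) (hstar : ∀ s : S, Vstar s = bellOp P R γ Vstar s) :
    ((∀ s : S, Vπ' s = Vπ s) → Vπ = Vstar) ∧
      (Vπ ≠ Vstar → (∀ s : S, Vπ s ≤ Vπ' s) ∧ ∃ s : S, Vπ s < Vπ' s) := by
  have hQπ : ∀ s, polOp P R γ π Vπ s = Qval P R γ Vπ s (π s) := fun s => rfl
  have hQπ' : ∀ s, polOp P R γ π' Vπ s = Qval P R γ Vπ s (π' s) := fun s => rfl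
  have hbellQ : ∀ s, bellOp P R γ Vπ s =
      Finset.univ.sup' Finset.univ_nonempty (Qval P R γ Vπ s) := fun s => rfl
  have part1 : (∀ s : S, Vπ' s = Vπ s) → Vπ = Vstar := by
    intro h
    have hVeq : Vπ' = Vπ := funext h
    rw [hVeq] at hfix'
    have hVbell : ∀ s, Vπ s = bellOp P R γ Vπ s := by
      intro s
      rw [hfix' s, hQπ' s, hgreedy s, hbellQ s]
    funext s
    exact le_antisymm
      (bell_le P R γ hP0 hP1 hγ0 hγ1 Vπ Vstar hVbell hstar s)
      (bell_le P R γ hP0 hP1 hγ0 hγ1 Vstar Vπ hstar hVbell s)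
  refine ⟨part1, fun hne => ?_⟩
  have hle : ∀ s, Vπ s ≤ Vπ' s := by
    apply le_of_le_polOp P R γ hP0 hP1 hγ0 hγ1 π' Vπ Vπ' _ hfix'
    intro s
    rw [hQπ' s, hgreedy s]
    calc Vπ s = Qval P R γ Vπ s (π s) := by rw [hfix s, hQπ s]
      _ ≤ Finset.univ.sup' Finset.univ_nonempty (Qval P R γ Vπ s) :=
        Finset.le_sup' (Qval P R γ Vπ s) (Finset.mem_univ (π s))
  refine ⟨hle, ?_⟩
  by_contra hcon
  push_neg at hcon
  exact hne (part1 fun s => le_antisymm (hcon s) (hle s))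
end

section
/- (Existence of an optimal stationary policy.) For a finite discounted MDP with optimal value function V* (the unique fixed point of the Bellman optimality operator T), let π* be any stationary policy that is greedy with respect to V*, i.e., for every s ∈ S, π*(s) attains max_{a∈A} γ · ∑_{s'∈S} P(s,a,s') · (V*(s') + R(s,a,s')) (such a π* exists since A is finite and nonempty). Then V^{π*}(s) = V*(s) for all s ∈ S; consequently V*(s) = max over stationary policies π of V^π(s) for every s ∈ S. -/
open Finset

/-- Comparison lemma: a fixed point of `T_π` is bounded above by any
pointwise super-fixed-point of `T_π`. -/
lemma polOp_comparison {S A : Type*} [Fintype S] [Nonempty S]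
    (P : S → A → S → ℝ) (R : S → A → S → ℝ) (γ : ℝ) (π : S → A)
    (hP0 : ∀ s a s', 0 ≤ P s a s') (hP1 : ∀ s a, ∑ s' : S, P s a s' = 1)
    (hγ0 : 0 < γ) (hγ1 : γ < 1)
    (W U : S → ℝ) (hW : ∀ s, W s = polOp P R γ π W s)
    (hU : ∀ s, polOp P R γ π U s ≤ U s) : ∀ s, W s ≤ U s := by
  obtain ⟨s0, -, hs0⟩ := Finset.exists_max_image Finset.univ (fun s => W s - U s)
    ⟨Classical.arbitrary S, Finset.mem_univ _⟩
  have key : W s0 - U s0 ≤ γ * (W s0 - U s0) := by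
    calc W s0 - U s0 ≤ polOp P R γ π W s0 - polOp P R γ π U s0 := by
          rw [← hW]; linarith [hU s0]
      _ = γ * ∑ s' : S, P s0 (π s0) s' * (W s' - U s') := by
          unfold polOp
          rw [← mul_sub, ← Finset.sum_sub_distrib]
          congr 1
          apply Finset.sum_congr rfl
          intro s' _
          ring
      _ ≤ γ * ∑ s' : S, P s0 (π s0) s' * (W s0 - U s0) := by
          apply mul_le_mul_of_nonneg_left _ hγ0.le
          apply Finset.sum_le_sum
          intro s' _
          exact mul_le_mul_of_nonneg_left (hs0 s' (Finset.mem_univ _)) (hP0 _ _ _)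
      _ = γ * (W s0 - U s0) := by
          rw [← Finset.sum_mul, hP1]; ring
  have hM : W s0 - U s0 ≤ 0 := by nlinarith
  intro s
  linarith [hs0 s (Finset.mem_univ _)]
/-- Existence of an optimal stationary policy: any stationary policy `π*`
that is greedy with respect to `V*` (the unique fixed point of the Bellman
optimality operator) satisfies `V^{π*} = V*`; consequently, for every state
`s`, `V*(s)` is the maximum of `V^π(s)` over all stationary policies `π`. -/

theorem optimal_stationary_policy_exists
    {S A : Type*} [Fintype S] [Fintype A] [Nonempty S] [Nonempty A]
    (P : S → A → S → ℝ) (R : S → A → S → ℝ) (γ : ℝ)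
    (hP0 : ∀ s a s', 0 ≤ P s a s') (hP1 : ∀ s a, ∑ s' : S, P s a s' = 1)
    (hγ0 : 0 < γ) (hγ1 : γ < 1)
    (Vstar : S → ℝ) (hstar : ∀ s : S, Vstar s = bellOp P R γ Vstar s)
    (πstar : S → A)
    (hgreedy : ∀ s : S,
      γ * ∑ s' : S, P s (πstar s) s' * (Vstar s' + R s (πstar s) s') =
        bellOp P R γ Vstar s)
    (Vπstar : S → ℝ)
    (hfix : ∀ s : S, Vπstar s = polOp P R γ πstar Vπstar s) :
    (∀ s : S, Vπstar s = Vstar s) ∧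
      ∀ s : S,
        IsGreatest
          {v : ℝ | ∃ (π : S → A) (Vπ : S → ℝ),
            (∀ s' : S, Vπ s' = polOp P R γ π Vπ s') ∧ v = Vπ s}
          (Vstar s) := by
  -- `Vstar` is an exact fixed point of `T_{π*}`.
  have hstarfix : ∀ s, polOp P R γ πstar Vstar s = Vstar s := by
    intro s
    rw [hstar s, ← hgreedy s]
    rfl
  -- For any policy `π`, `T_π Vstar ≤ Vstar`.
  have hsub : ∀ (π : S → A) (s : S), polOp P R γ π Vstar s ≤ Vstar s := by
    intro π s
    rw [hstar s]
    exact Finset.le_sup' (fun a : A =>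
      γ * ∑ s' : S, P s a s' * (Vstar s' + R s a s')) (Finset.mem_univ (π s))
  have h1 : ∀ s, Vπstar s ≤ Vstar s :=
    polOp_comparison P R γ πstar hP0 hP1 hγ0 hγ1 Vπstar Vstar hfix (hsub πstar)
  have h2 : ∀ s, Vstar s ≤ Vπstar s :=
    polOp_comparison P R γ πstar hP0 hP1 hγ0 hγ1 Vstar Vπstar
      (fun s => (hstarfix s).symm) (fun s => le_of_eq (hfix s).symm)
  have heq : ∀ s, Vπstar s = Vstar s := fun s => le_antisymm (h1 s) (h2 s)
  refine ⟨heq, fun s => ⟨⟨πstar, Vπstar, hfix, (heq s).symm⟩, ?_⟩⟩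
  rintro v ⟨π, Vπ, hVπ, rfl⟩
  exact polOp_comparison P R γ π hP0 hP1 hγ0 hγ1 Vπ Vstar hVπ (hsub π) s
end
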